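/- arXiv:2501.03710 — 5 statements merged into one kernel-verified Lean document; each statement's English description precedes it below -/
import Mathlib

section
/- For every finite simple graph G and every linear order π* of the vertices of the bipartite double cover G*, there exists an induced matching M of G* that neatly crosses π* and satisfies 2·|M| ≥ lsimw(G). -/
/-! ## Common definitions -/

/-- A (partial) assignment over variable type `V`. -/
abbrev Asg (V : Type*) := V → Option Bool

/-- The domain (set of variables) of an assignment. -/
def Asg.dom {V : Type*} (g : Asg V) : Set V := {x | g x ≠ none}

/-- Union of two assignments (the left one takes precedence where both are defined). -/
def Asg.union {V : Type*} (g h : Asg V) : Asg V := fun x => (g x).orElse (fun _ => h x)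

/-- A set of assignments is uniform with common domain `S`. -/
def UniformOn {V : Type*} (H : Set (Asg V)) (S : Set V) : Prop := ∀ g ∈ H, g.dom = S

/-- The product `H₁ × H₂` of two sets of assignments. -/
def AsgProd {V : Type*} (H₁ H₂ : Set (Asg V)) : Set (Asg V) := Set.image2 Asg.union H₁ H₂

/-- `H`, a uniform set of assignments with variable set `W`, is a rectangle that
breaks `Y ⊆ W`: it has nonempty uniform witnesses whose nonempty variable sets
partition `W` and both meet `Y`. -/
def BreaksOn {V : Type*} (H : Set (Asg V)) (W Y : Set V) : Prop :=
  ∃ (H₁ H₂ : Set (Asg V)) (S₁ S₂ : Set V),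
    H₁.Nonempty ∧ H₂.Nonempty ∧ UniformOn H₁ S₁ ∧ UniformOn H₂ S₂ ∧
    S₁.Nonempty ∧ S₂.Nonempty ∧ S₁ ∩ S₂ = ∅ ∧ S₁ ∪ S₂ = W ∧
    H = AsgProd H₁ H₂ ∧ (Y ∩ S₁).Nonempty ∧ (Y ∩ S₂).Nonempty

/-- Combination of finitely many assignments (with pairwise disjoint domains). -/
def Asg.combine {V : Type*} {m : ℕ} (c : Fin m → Asg V) : Asg V :=
  fun x => (List.finRange m).foldr (fun i acc => (c i x).orElse (fun _ => acc)) none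

/-- The product `H 0 × ⋯ × H (m-1)` of finitely many sets of assignments. -/
def bigProd {V : Type*} {m : ℕ} (H : Fin m → Set (Asg V)) : Set (Asg V) :=
  {g | ∃ c : Fin m → Asg V, (∀ i, c i ∈ H i) ∧ g = Asg.combine c}

/-- `M` is a matching of `G` (a set of pairwise disjoint edges of `G`). -/
def IsMatchingSet {V : Type*} (G : SimpleGraph V) (M : Set (Sym2 V)) : Prop :=
  M ⊆ G.edgeSet ∧ ∀ e ∈ M, ∀ f ∈ M, e ≠ f → ∀ x, x ∈ e → x ∉ f

/-- The set `V(M)` of endpoints of a set of edges. -/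
def endpoints {V : Type*} (M : Set (Sym2 V)) : Set V := {v | ∃ e ∈ M, v ∈ e}

/-- `M` is an induced matching of `G`: a matching such that the subgraph of `G`
induced by `V(M)` has edge set exactly `M`. -/
def IsInducedMatchingSet {V : Type*} (G : SimpleGraph V) (M : Set (Sym2 V)) : Prop :=
  IsMatchingSet G M ∧ ∀ e ∈ G.edgeSet, (∀ v ∈ e, v ∈ endpoints M) → e ∈ M

/-- `P` is a prefix of the linear order `π`. -/
def IsPrefix {V : Type*} (π : LinearOrder V) (P : Set V) : Prop :=
  ∀ x ∈ P, ∀ y, π.le y x → y ∈ P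

/-- `M` crosses the linear order `π`: some prefix of `π` contains exactly one
endpoint of every edge of `M`. -/
def Crosses {V : Type*} (π : LinearOrder V) (M : Set (Sym2 V)) : Prop :=
  ∃ P : Set V, IsPrefix π P ∧ ∀ e ∈ M, ∃ x y, e = s(x, y) ∧ x ∈ P ∧ y ∉ P

/-- Linear special induced matching width: the minimum over linear orders of the
maximum size of an induced matching crossing the order. -/
noncomputable def lsimw {V : Type*} (G : SimpleGraph V) : ℕ :=
  sInf {k | ∃ π : LinearOrder V, ∀ M : Set (Sym2 V),
    IsInducedMatchingSet G M → Crosses π M → M.ncard ≤ k}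

/-- Linear maximum matching width: as `lsimw` but with arbitrary matchings. -/
noncomputable def lmmw {V : Type*} (G : SimpleGraph V) : ℕ :=
  sInf {k | ∃ π : LinearOrder V, ∀ M : Set (Sym2 V),
    IsMatchingSet G M → Crosses π M → M.ncard ≤ k}

/-- The bipartite double cover `G*`; vertex `v[1]` is `(v, false)` and `v[2]` is `(v, true)`. -/
def doubleCover {V : Type*} (G : SimpleGraph V) : SimpleGraph (V × Bool) where
  Adj a b := G.Adj a.1 b.1 ∧ a.2 ≠ b.2
  symm := ⟨fun a b h => ⟨h.1.symm, h.2.symm⟩⟩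
  loopless := ⟨fun a h => h.2 rfl⟩

/-- `M`, a matching of the double cover, neatly crosses a linear order `π` of
`V × Bool`: every edge of `M` goes from `U[1]` to `W[2]` for some `U, W ⊆ V`, and
some prefix of `π` contains all endpoints of `M` on one of the two sides and none
of the endpoints on the other side. -/
def NeatlyCrosses {V : Type*} (π : LinearOrder (V × Bool)) (M : Set (Sym2 (V × Bool))) : Prop :=
  ∃ U W : Set V,
    (∀ e ∈ M, ∃ u ∈ U, ∃ w ∈ W, e = s((u, false), (w, true))) ∧
    ∃ P : Set (V × Bool), IsPrefix π P ∧
      ((∀ v ∈ endpoints M, (v.2 = false → v ∈ P) ∧ (v.2 = true → v ∉ P)) ∨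
       (∀ v ∈ endpoints M, (v.2 = true → v ∈ P) ∧ (v.2 = false → v ∉ P)))

/-- The `n × n` grid graph. -/
def gridGraph (n : ℕ) : SimpleGraph (Fin n × Fin n) :=
  SimpleGraph.fromRel (fun p q =>
    (p.1 = q.1 ∧ (p.2 : ℕ) + 1 = (q.2 : ℕ)) ∨ (p.2 = q.2 ∧ (p.1 : ℕ) + 1 = (q.1 : ℕ)))

/-- The spanning subgraph of the `n × n` grid consisting of the horizontal edges. -/
def gridHoriz (n : ℕ) : SimpleGraph (Fin n × Fin n) :=
  SimpleGraph.fromRel (fun p q => p.1 = q.1 ∧ (p.2 : ℕ) + 1 = (q.2 : ℕ))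

/-- A clause: a set of literals, a literal being a variable with a polarity
(`true` = positive). -/
abbrev Clause (W : Type*) := Set (W × Bool)

/-- A CNF: a set of clauses. -/
abbrev CNF (W : Type*) := Set (Clause W)

/-- A total assignment satisfies a CNF. -/
def Satisfies {W : Type*} (a : W → Bool) (φ : CNF W) : Prop :=
  ∀ C ∈ φ, ∃ l ∈ C, a l.1 = l.2

/-- The set of variables occurring in a CNF. -/
def cnfVars {W : Type*} (φ : CNF W) : Set W := {x | ∃ C ∈ φ, ∃ b, (x, b) ∈ C}

/-- The CNF `φ(G)`: a positive clause `(u ∨ v)` for every edge of `G`. -/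
def phiCNF {V : Type*} (G : SimpleGraph V) : CNF V :=
  {C | ∃ e ∈ G.edgeSet, C = {l | ∃ x ∈ e, l = (x, true)}}

/-- The CNF `ψ(G)`: the positive edge clauses of the double cover `G*` together with
the two all-negative clauses `⋁ᵥ ¬v[1]` and `⋁ᵥ ¬v[2]`. -/
def psiCNF {V : Type*} (G : SimpleGraph V) : CNF (V × Bool) :=
  {C | ∃ e ∈ (doubleCover G).edgeSet, C = {l | ∃ x ∈ e, l = (x, true)}} ∪
    {{l | ∃ v : V, l = ((v, false), false)}, {l | ∃ v : V, l = ((v, true), false)}}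

/-- Make a total assignment out of a partial one (defaulting to `false` off the domain). -/
def Asg.totalize {W : Type*} (g : Asg W) : W → Bool := fun x => (g x).getD false

/-- `S(φ)|_g`: assignments `h` with domain `var(φ) \ var(g)` such that `g ∪ h` satisfies `φ`. -/
def solsRestrict {W : Type*} (φ : CNF W) (g : Asg W) : Set (Asg W) :=
  {h | h.dom = cnfVars φ \ g.dom ∧ Satisfies (Asg.totalize (Asg.union g h)) φ}

/-- A partial assignment satisfies a clause. -/
def satClausePartial {W : Type*} (g : Asg W) (C : Clause W) : Prop :=
  ∃ l ∈ C, g l.1 = some l.2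

/-- The CNF `φ[g]`: delete clauses satisfied by `g` and remove from the remaining
clauses all literals whose variable is assigned by `g`. -/
def cnfRestrictFormula {W : Type*} (φ : CNF W) (g : Asg W) : CNF W :=
  {C' | ∃ C ∈ φ, ¬ satClausePartial g C ∧ C' = {l ∈ C | l.1 ∉ g.dom}}

/-- The total satisfying assignments of a CNF, over its variable set. -/
def totalSols {W : Type*} (φ : CNF W) : Set (Asg W) :=
  {h | h.dom = cnfVars φ ∧ Satisfies (Asg.totalize h) φ}

/-- All assignments with domain `Y`. -/
def allAsgOn {W : Type*} (Y : Set W) : Set (Asg W) := {h | h.dom = Y}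

/-- Binary decision trees over variables `X`. -/
inductive DTree (X : Type*) where
  | leaf : Bool → DTree X
  | node : X → DTree X → DTree X → DTree X

namespace DTree

/-- The size (number of nodes) of a decision tree. -/
def size {X : Type*} : DTree X → ℕ
  | leaf _ => 1
  | node _ t0 t1 => 1 + t0.size + t1.size

/-- The variables occurring in a decision tree. -/
def varsOf {X : Type*} : DTree X → Set X
  | leaf _ => ∅
  | node x t0 t1 => {x} ∪ t0.varsOf ∪ t1.varsOf

/-- The read-once condition: no variable occurs twice on a root-leaf path. -/
def ReadOnce {X : Type*} : DTree X → Prop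
  | leaf _ => True
  | node x t0 t1 => x ∉ t0.varsOf ∧ x ∉ t1.varsOf ∧ t0.ReadOnce ∧ t1.ReadOnce

/-- Evaluation of a decision tree on a total assignment. -/
def eval {X : Type*} : DTree X → (X → Bool) → Bool
  | leaf b, _ => b
  | node x t0 t1, a => if a x then t1.eval a else t0.eval a

end DTree

/-- `(τ, B)` is a tree decomposition of `H`. -/
def IsTreeDecomp {V : Type u} {T : Type v} (H : SimpleGraph V) (τ : SimpleGraph T)
    (B : T → Set V) : Prop :=
  τ.IsTree ∧ (∀ e ∈ H.edgeSet, ∃ t, ∀ v ∈ e, v ∈ B t) ∧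
    (∀ v : V, (τ.induce {t | v ∈ B t}).Connected)

/-- The treewidth of a graph: minimum width over all tree decompositions. -/
noncomputable def treewidth {V : Type u} (H : SimpleGraph V) : ℕ :=
  sInf {k | ∃ (T : Type) (τ : SimpleGraph T) (B : T → Set V),
    IsTreeDecomp H τ B ∧ ∀ t, (B t).ncard ≤ k + 1}

/-- `B : Fin m → Set V` is a path decomposition of `H`. -/
def IsPathDecomp {V : Type u} (H : SimpleGraph V) (m : ℕ) (B : Fin m → Set V) : Prop :=
  (∀ e ∈ H.edgeSet, ∃ i, ∀ v ∈ e, v ∈ B i) ∧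
    (∀ v : V, (∃ i, v ∈ B i) ∧
      ∀ i j k : Fin m, i ≤ j → j ≤ k → v ∈ B i → v ∈ B k → v ∈ B j)

/-- The pathwidth of a graph: minimum width over all path decompositions. -/
noncomputable def pathwidth {V : Type u} (H : SimpleGraph V) : ℕ :=
  sInf {k | ∃ (m : ℕ) (B : Fin m → Set V), IsPathDecomp H m B ∧ ∀ i, (B i).ncard ≤ k + 1}

/-- The incidence graph of a CNF: variables on one side, clauses on the other,
a variable adjacent to exactly the clauses in which it occurs. -/
def incidenceGraph {W : Type u} (φ : CNF W) : SimpleGraph (W ⊕ {C : Clause W // C ∈ φ}) :=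
  SimpleGraph.fromRel (fun a b => ∃ (x : W) (C : {C : Clause W // C ∈ φ}),
    a = Sum.inl x ∧ b = Sum.inr C ∧ ∃ bb : Bool, (x, bb) ∈ C.1)

/-!
Pull the order `π` of `V × Bool` back to `V` by ordering each vertex `v` by whichever of its
copies `v[1]`, `v[2]` comes first in `π`. By the definition of `lsimw`, some induced matching
`M'` of `G` of size at least `lsimw G` crosses the pulled-back order at a prefix `P₀`. Every
edge of `M'` has its `P₀`-endpoint `x` with first copy on side `1` or side `2`; for one side `b`
this holds for at least half the edges. Lifting each such edge `xy` to `x[b] y[b̄]` gives an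
induced matching of `G*`, and the `π`-downward closure of the first copies of `P₀` is a prefix
containing every `x[b]` and no copy of any vertex outside `P₀`.
-/

section Matchings

variable {α : Type*}

lemma isInducedMatchingSet_empty (G : SimpleGraph α) : IsInducedMatchingSet G ∅ :=
  ⟨⟨Set.empty_subset _, fun _ he => he.elim⟩,
    fun e _ he => (he _ (Sym2.out_fst_mem e)).elim fun _ h => h.1.elim⟩

lemma crosses_empty (σ : LinearOrder α) : Crosses σ (∅ : Set (Sym2 α)) :=
  ⟨∅, fun _ hx => hx.elim, fun _ he => he.elim⟩

lemma IsMatchingSet.eq_of_mem_of_mem {G : SimpleGraph α} {M : Set (Sym2 α)}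
    (hM : IsMatchingSet G M) {e f : Sym2 α} (he : e ∈ M) (hf : f ∈ M) {x : α}
    (hxe : x ∈ e) (hxf : x ∈ f) : e = f :=
  by_contra fun hne => hM.2 e he f hf hne x hxe hxf

lemma eq_and_eq_of_mk_eq_mk_of_separated {P : Set α} {x y x' y' : α}
    (h : s(x, y) = s(x', y')) (hx : x ∈ P) (hy' : y' ∉ P) : x = x' ∧ y = y' := by
  rcases Sym2.eq_iff.mp h with h | ⟨rfl, -⟩
  · exact h
  · exact absurd hx hy'

def crossingEdges (P : Set α) (M : Set (Sym2 α)) : Set (Sym2 α) :=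
  {e ∈ M | ∃ x y, e = s(x, y) ∧ x ∈ P ∧ y ∉ P}

lemma exists_two_mul_ncard_crossingEdges_ge {P : Set α} {M : Set (Sym2 α)}
    (hM : ∀ e ∈ M, ∃ x y, e = s(x, y) ∧ x ∈ P ∧ y ∉ P) (g : α → Bool) :
    ∃ b, M.ncard ≤ 2 * (crossingEdges (P ∩ {x | g x = b}) M).ncard := by
  set A := fun b => crossingEdges (P ∩ {x | g x = b}) M
  have hsplit : M = A false ∪ A true := by
    refine Set.Subset.antisymm (fun e he => ?_) (Set.union_subset (fun _ h => h.1) fun _ h => h.1)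
    obtain ⟨x, y, rfl, hx, hy⟩ := hM e he
    cases hgx : g x
    · exact Or.inl ⟨he, x, y, rfl, ⟨hx, hgx⟩, fun h => hy h.1⟩
    · exact Or.inr ⟨he, x, y, rfl, ⟨hx, hgx⟩, fun h => hy h.1⟩
  have hle : M.ncard ≤ (A false).ncard + (A true).ncard :=
    (congrArg Set.ncard hsplit).le.trans (Set.ncard_union_le _ _)
  by_cases h : (A false).ncard ≤ (A true).ncard
  · exact ⟨true, show M.ncard ≤ 2 * (A true).ncard by omega⟩
  · exact ⟨false, show M.ncard ≤ 2 * (A false).ncard by omega⟩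

lemma exists_induced_crosses_lsimw_le_ncard (G : SimpleGraph α) (σ : LinearOrder α) :
    ∃ M, IsInducedMatchingSet G M ∧ Crosses σ M ∧ lsimw G ≤ M.ncard := by
  by_contra! h
  have hpos : 0 < lsimw G := by
    simpa using h ∅ (isInducedMatchingSet_empty G) (crosses_empty σ)
  have : lsimw G ≤ lsimw G - 1 :=
    Nat.sInf_le ⟨σ, fun M hM hσ => Nat.le_pred_of_lt (h M hM hσ)⟩
  omega

end Matchings

section DoubleCover

variable {V : Type*}

def liftToDoubleCover (b : Bool) (P : Set V) (M : Set (Sym2 V)) : Set (Sym2 (V × Bool)) :=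
  {E | ∃ x y, s(x, y) ∈ M ∧ x ∈ P ∧ y ∉ P ∧ E = s((x, b), (y, !b))}

lemma IsInducedMatchingSet.liftToDoubleCover {G : SimpleGraph V} {M : Set (Sym2 V)}
    (hM : IsInducedMatchingSet G M) (b : Bool) (P : Set V) :
    IsInducedMatchingSet (doubleCover G) (liftToDoubleCover b P M) := by
  refine ⟨⟨?_, ?_⟩, ?_⟩
  · rintro E ⟨x, y, hxy, -, -, -, rfl⟩
    exact ⟨hM.1.1 hxy, by cases b <;> simp⟩
  · rintro E ⟨x, y, hxy, hx, -, -, rfl⟩ E' ⟨x', y', hxy', -, hy', -, rfl⟩ hne v hv hv'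
    apply hne
    rw [Sym2.mem_iff] at hv hv'
    rcases hv with rfl | rfl <;> rcases hv' with h | h <;> simp only [Prod.mk.injEq] at h
    · obtain ⟨rfl, -⟩ := h
      obtain ⟨-, rfl⟩ := eq_and_eq_of_mk_eq_mk_of_separated
        (hM.1.eq_of_mem_of_mem hxy hxy' (Sym2.mem_mk_left _ _) (Sym2.mem_mk_left _ _)) hx hy'
      rfl
    · cases b <;> simp at h
    · cases b <;> simp at h
    · obtain ⟨rfl, -⟩ := h
      obtain ⟨rfl, -⟩ := eq_and_eq_of_mk_eq_mk_of_separated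
        (hM.1.eq_of_mem_of_mem hxy hxy' (Sym2.mem_mk_right _ _) (Sym2.mem_mk_right _ _)) hx hy'
      rfl
  · intro E hE hends
    induction E using Sym2.ind with
    | _ z w =>
    obtain ⟨hadj, hzw⟩ : G.Adj z.1 w.1 ∧ z.2 ≠ w.2 := hE
    obtain ⟨_, ⟨x₁, y₁, hxy₁, hx₁, hy₁, -, rfl⟩, hz⟩ := hends z (Sym2.mem_mk_left _ _)
    obtain ⟨_, ⟨x₂, y₂, hxy₂, hx₂, hy₂, -, rfl⟩, hw⟩ := hends w (Sym2.mem_mk_right _ _)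
    rw [Sym2.mem_iff] at hz hw
    rcases hz with rfl | rfl <;> rcases hw with rfl | rfl
    · exact absurd rfl hzw
    · refine ⟨x₁, y₂, hM.2 _ hadj fun u hu => ?_, hx₁, hy₂, rfl⟩
      rcases Sym2.mem_iff.mp hu with rfl | rfl
      exacts [⟨_, hxy₁, Sym2.mem_mk_left _ _⟩, ⟨_, hxy₂, Sym2.mem_mk_right _ _⟩]
    · refine ⟨x₂, y₁, hM.2 _ hadj.symm fun u hu => ?_, hx₂, hy₁, Sym2.eq_swap⟩
      rcases Sym2.mem_iff.mp hu with rfl | rfl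
      exacts [⟨_, hxy₂, Sym2.mem_mk_left _ _⟩, ⟨_, hxy₁, Sym2.mem_mk_right _ _⟩]
    · exact absurd rfl hzw

lemma ncard_liftToDoubleCover (b : Bool) (P : Set V) (M : Set (Sym2 V)) :
    (liftToDoubleCover b P M).ncard = (crossingEdges P M).ncard := by
  have hinj : Set.InjOn (Sym2.map Prod.fst) (liftToDoubleCover b P M) := by
    rintro _ ⟨x, y, -, hx, -, -, rfl⟩ _ ⟨x', y', -, -, hy', -, rfl⟩ h
    simp only [Sym2.map_mk] at h
    obtain ⟨rfl, rfl⟩ := eq_and_eq_of_mk_eq_mk_of_separated h hx hy'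
    rfl
  have himage : Sym2.map Prod.fst '' liftToDoubleCover b P M = crossingEdges P M := by
    ext e
    constructor
    · rintro ⟨_, ⟨x, y, hxy, hx, hy, rfl⟩, rfl⟩
      exact ⟨hxy, x, y, Sym2.map_mk _ _ _, hx, hy⟩
    · rintro ⟨he, x, y, rfl, hx, hy⟩
      exact ⟨_, ⟨x, y, he, hx, hy, rfl⟩, Sym2.map_mk _ _ _⟩
  rw [← himage, hinj.ncard_image]

lemma neatlyCrosses_liftToDoubleCover {π : LinearOrder (V × Bool)} {P : Set (V × Bool)}
    (hP : IsPrefix π P) {b : Bool} {Q : Set V} {M : Set (Sym2 V)}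
    (hsep : ∀ x y, s(x, y) ∈ M → x ∈ Q → y ∉ Q → (x, b) ∈ P ∧ (y, !b) ∉ P) :
    NeatlyCrosses π (liftToDoubleCover b Q M) := by
  have hends : ∀ v ∈ endpoints (liftToDoubleCover b Q M),
      (v.2 = b → v ∈ P) ∧ (v.2 = !b → v ∉ P) := by
    rintro v ⟨_, ⟨x, y, hxy, hx, hy, rfl⟩, hv⟩
    rcases Sym2.mem_iff.mp hv with rfl | rfl
    · exact ⟨fun _ => (hsep x y hxy hx hy).1, fun h => absurd h (by cases b <;> simp)⟩
    · exact ⟨fun h => absurd h (by cases b <;> simp), fun _ => (hsep x y hxy hx hy).2⟩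
  refine ⟨Set.univ, Set.univ, ?_, P, hP, ?_⟩
  · rintro _ ⟨x, y, -, -, -, rfl⟩
    cases b
    exacts [⟨x, trivial, y, trivial, rfl⟩, ⟨y, trivial, x, trivial, Sym2.eq_swap⟩]
  · cases b
    exacts [Or.inl hends, Or.inr hends]

end DoubleCover

section FirstCopy

variable {V : Type*} (π : LinearOrder (V × Bool))

def firstCopy (v : V) : V × Bool :=
  if π.le (v, false) (v, true) then (v, false) else (v, true)

lemma firstCopy_fst (v : V) : (firstCopy π v).1 = v := by
  unfold firstCopy
  split_ifs <;> rfl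

lemma firstCopy_le (v : V) (c : Bool) : π.le (firstCopy π v) (v, c) := by
  unfold firstCopy
  split_ifs with h <;> cases c
  exacts [π.le_refl _, h, (π.le_total _ _).resolve_left h, π.le_refl _]

lemma firstCopy_injective : Function.Injective (firstCopy π) := fun a b h => by
  rw [← firstCopy_fst π a, h, firstCopy_fst]

abbrev firstCopyOrder : LinearOrder V :=
  @LinearOrder.lift' V (V × Bool) π (firstCopy π) (firstCopy_injective π)

lemma firstCopy_eq_mk_snd (v : V) : firstCopy π v = (v, (firstCopy π v).2) :=
  Prod.ext (firstCopy_fst π v) rfl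

lemma exists_isPrefix_of_isPrefix_firstCopyOrder {P₀ : Set V}
    (hP₀ : IsPrefix (firstCopyOrder π) P₀) :
    ∃ P, IsPrefix π P ∧ (∀ x ∈ P₀, firstCopy π x ∈ P) ∧ ∀ y ∉ P₀, ∀ c, (y, c) ∉ P := by
  refine ⟨{z | ∃ x ∈ P₀, π.le z (firstCopy π x)}, ?_, fun x hx => ⟨x, hx, π.le_refl _⟩, ?_⟩
  · rintro z ⟨x, hx, hzx⟩ w hwz
    exact ⟨x, hx, π.le_trans _ _ _ hwz hzx⟩
  · rintro y hy c ⟨x, hx, hyx⟩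
    exact hy (hP₀ x hx y (π.le_trans _ _ _ (firstCopy_le π y c) hyx))

end FirstCopy

theorem stmt1_general {V : Type*} (G : SimpleGraph V) (π : LinearOrder (V × Bool)) :
    ∃ M : Set (Sym2 (V × Bool)),
      IsInducedMatchingSet (doubleCover G) M ∧ NeatlyCrosses π M ∧
        lsimw G ≤ 2 * M.ncard := by
  obtain ⟨M', hM', ⟨P₀, hP₀, hcross⟩, hlsimw⟩ :=
    exists_induced_crosses_lsimw_le_ncard G (firstCopyOrder π)
  obtain ⟨P, hP, hin, hout⟩ := exists_isPrefix_of_isPrefix_firstCopyOrder π hP₀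
  obtain ⟨b, hb⟩ := exists_two_mul_ncard_crossingEdges_ge hcross fun x => (firstCopy π x).2
  refine ⟨liftToDoubleCover b (P₀ ∩ {x | (firstCopy π x).2 = b}) M', hM'.liftToDoubleCover _ _,
    neatlyCrosses_liftToDoubleCover hP fun x y hxy hx _ => ⟨?_, ?_⟩, ?_⟩
  · rw [← hx.2, ← firstCopy_eq_mk_snd]
    exact hin x hx.1
  · obtain ⟨x', y', he, -, hy'⟩ := hcross _ hxy
    obtain ⟨-, rfl⟩ := eq_and_eq_of_mk_eq_mk_of_separated he hx.1 hy'
    exact hout _ hy' _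
  · rw [ncard_liftToDoubleCover]
    omega

/-- every linear order of the vertices of the bipartite double cover `G*`
is neatly crossed by an induced matching `M` of `G*` with `2|M| ≥ lsimw(G)`. -/
theorem stmt1 {V : Type*} [Fintype V] (G : SimpleGraph V) (π : LinearOrder (V × Bool)) :
    ∃ M : Set (Sym2 (V × Bool)),
      IsInducedMatchingSet (doubleCover G) M ∧ NeatlyCrosses π M ∧
        lsimw G ≤ 2 * M.ncard :=
  stmt1_general G π
end

section
/- Let G be a finite simple graph without isolated vertices and let M = {{u₁[1],w₁[2]},…,{u_q[1],w_q[2]}} be an induced matching of the bipartite double cover G* (with u₁,…,u_q pairwise distinct and w₁,…,w_q pairwise distinct vertices of G). Let Z be a nonempty subset of {u₁[1],…,u_q[1]}, let I = {i : u_i[1] ∉ Z}, and let J ⊆ I. Let a be the total assignment on V(G*) defined by a(x) = 0 if x ∈ Z ∪ {w_j[2] : j ∈ J} and a(x) = 1 otherwise. Then a satisfies ψ(G) if and only if J ≠ ∅. -/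
/-! The zeros of `a` are `Z` in the first copy and `w_J[2]` in the second. The all-negative
clause of the first copy holds since `Z ≠ ∅`, and that of the second copy holds iff `J ≠ ∅`.
The edge clauses hold because the zeros are independent in `G*`: an edge between zeros joins
some `u_i[1] ∈ Z` to some `w_j[2]` with `j ∈ J`; as `M` is induced this edge lies in `M`, so
`i = j`, contradicting `u_j[1] ∉ Z`. -/

theorem IsInducedMatchingSet.mk_mem {V : Type*} {H : SimpleGraph V} {M : Set (Sym2 V)}
    (hM : IsInducedMatchingSet H M) {x y : V} (hx : x ∈ endpoints M) (hy : y ∈ endpoints M)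
    (hxy : H.Adj x y) : s(x, y) ∈ M :=
  hM.2 _ hxy fun v hv => by rcases Sym2.mem_iff.1 hv with rfl | rfl <;> assumption

theorem eq_of_adj_of_isInducedMatchingSet_doubleCover {V : Type*} {G : SimpleGraph V} {q : ℕ}
    {u w : Fin q → V} (hu : Function.Injective u) (hw : Function.Injective w)
    (hM : IsInducedMatchingSet (doubleCover G) {e | ∃ i, e = s((u i, false), (w i, true))})
    {i j : Fin q} (hij : G.Adj (u i) (w j)) : i = j := by
  obtain ⟨k, hk⟩ := hM.mk_mem (x := (u i, false)) (y := (w j, true))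
    ⟨_, ⟨i, rfl⟩, Sym2.mem_mk_left _ _⟩ ⟨_, ⟨j, rfl⟩, Sym2.mem_mk_right _ _⟩
    ⟨hij, Bool.false_ne_true⟩
  rcases Sym2.eq_iff.1 hk with ⟨hi, hj⟩ | ⟨hi, -⟩
  · exact (hu (congrArg Prod.fst hi)).trans (hw (congrArg Prod.fst hj)).symm
  · simp at hi

theorem satisfies_psiCNF_iff {V : Type*} (G : SimpleGraph V) (a : V × Bool → Bool) :
    Satisfies a (psiCNF G) ↔
      (∀ x y, (doubleCover G).Adj x y → a x = true ∨ a y = true) ∧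
        (∃ v, a (v, false) = false) ∧ ∃ v, a (v, true) = false := by
  simp only [Satisfies, psiCNF, Set.mem_union, Set.mem_insert_iff, Set.mem_singleton_iff,
    Set.mem_ofPred_eq]
  constructor
  · intro h
    refine ⟨fun x y hxy => ?_, ?_, ?_⟩
    · obtain ⟨_, ⟨z, hz, rfl⟩, hl⟩ := h _ (Or.inl ⟨s(x, y), hxy, rfl⟩)
      rcases Sym2.mem_iff.1 hz with rfl | rfl
      exacts [Or.inl hl, Or.inr hl]
    · obtain ⟨_, ⟨v, rfl⟩, hv⟩ := h _ (Or.inr (Or.inl rfl))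
      exact ⟨v, hv⟩
    · obtain ⟨_, ⟨v, rfl⟩, hv⟩ := h _ (Or.inr (Or.inr rfl))
      exact ⟨v, hv⟩
  · rintro ⟨hedge, ⟨v₁, h₁⟩, v₂, h₂⟩ C (⟨e, he, rfl⟩ | rfl | rfl)
    · induction e using Sym2.ind with
      | h x y =>
        rcases hedge x y he with hx | hy
        exacts [⟨_, ⟨x, Sym2.mem_mk_left x y, rfl⟩, hx⟩,
          ⟨_, ⟨y, Sym2.mem_mk_right x y, rfl⟩, hy⟩]
    · exact ⟨_, ⟨v₁, rfl⟩, h₁⟩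
    · exact ⟨_, ⟨v₂, rfl⟩, h₂⟩

theorem doubleCover_adj_imp_eq_true_or_eq_true {V : Type*} {G : SimpleGraph V} {q : ℕ}
    {u w : Fin q → V} (hu : Function.Injective u) (hw : Function.Injective w)
    (hM : IsInducedMatchingSet (doubleCover G) {e | ∃ i, e = s((u i, false), (w i, true))})
    {Z : Set (V × Bool)} (hZsub : Z ⊆ {x | ∃ i : Fin q, x = (u i, false)})
    {J : Set (Fin q)} (hJ : ∀ j ∈ J, (u j, false) ∉ Z) {a : V × Bool → Bool}
    (ha : ∀ x, a x = false ↔ (x ∈ Z ∨ ∃ j ∈ J, x = (w j, true)))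
    {x y : V × Bool} (hxy : (doubleCover G).Adj x y) : a x = true ∨ a y = true := by
  have hZ_not_snd : ∀ v, (v, true) ∉ Z := fun v hv => by simpa using hZsub hv
  have hZ_nbr : ∀ v, (v, false) ∈ Z → ∀ v', G.Adj v v' → a (v', true) = true := by
    refine fun v hv v' hvv' => Bool.not_eq_false _ |>.mp fun hav' => ?_
    obtain ⟨i, hi⟩ := hZsub hv
    obtain rfl : v = u i := congrArg Prod.fst hi
    rcases (ha _).1 hav' with hv'Z | ⟨j, hj, hv'j⟩
    · exact hZ_not_snd v' hv'Z
    · obtain rfl : v' = w j := congrArg Prod.fst hv'j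
      obtain rfl := eq_of_adj_of_isInducedMatchingSet_doubleCover hu hw hM hvv'
      exact hJ i hj hv
  wlog hx : x.2 = false generalizing x y
  · simpa [or_comm] using this hxy.symm (by simpa [hx] using hxy.2.symm)
  obtain ⟨v, b⟩ := x
  obtain ⟨y, c⟩ := y
  obtain rfl : b = false := hx
  obtain rfl : c = true := by simpa [eq_comm] using hxy.2
  refine or_iff_not_imp_left.2 fun hav => hZ_nbr v ?_ y hxy.1
  rcases (ha _).1 (by simpa using hav) with hvZ | ⟨j, -, hvj⟩
  exacts [hvZ, absurd (congrArg Prod.snd hvj) Bool.false_ne_true]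

theorem stmt5_general {V : Type*} (G : SimpleGraph V)
    (q : ℕ) (u w : Fin q → V)
    (hu : Function.Injective u) (hw : Function.Injective w)
    (M : Set (Sym2 (V × Bool)))
    (hM : M = {e | ∃ i : Fin q, e = s((u i, false), (w i, true))})
    (hMind : IsInducedMatchingSet (doubleCover G) M)
    (Z : Set (V × Bool)) (hZsub : Z ⊆ {x | ∃ i : Fin q, x = (u i, false)})
    (hZne : Z.Nonempty)
    (J : Set (Fin q)) (hJ : ∀ j ∈ J, (u j, false) ∉ Z)
    (a : V × Bool → Bool)
    (ha : ∀ x, a x = false ↔ (x ∈ Z ∨ ∃ j ∈ J, x = (w j, true))) :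
    Satisfies a (psiCNF G) ↔ J.Nonempty := by
  subst hM
  have hZ_not_snd : ∀ v, (v, true) ∉ Z := fun v hv => by simpa using hZsub hv
  rw [satisfies_psiCNF_iff]
  constructor
  · rintro ⟨-, -, v, hv⟩
    rcases (ha _).1 hv with hvZ | ⟨j, hj, -⟩
    exacts [absurd hvZ (hZ_not_snd v), ⟨j, hj⟩]
  · rintro ⟨j, hj⟩
    obtain ⟨z, hz⟩ := hZne
    obtain ⟨i, rfl⟩ := hZsub hz
    exact ⟨fun _ _ => doubleCover_adj_imp_eq_true_or_eq_true hu hw hMind hZsub hJ ha,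
      ⟨u i, (ha _).2 (Or.inl hz)⟩, ⟨w j, (ha _).2 (Or.inr ⟨j, hj, rfl⟩)⟩⟩

/-- with `M = {{uᵢ[1], wᵢ[2]}}` an induced matching of `G*`, `Z` a nonempty
subset of `{uᵢ[1]}`, `J ⊆ I = {i : uᵢ[1] ∉ Z}`, the total assignment sending exactly
`Z ∪ {wⱼ[2] : j ∈ J}` to `0` satisfies `ψ(G)` iff `J ≠ ∅`. -/
theorem stmt5 {V : Type*} [Fintype V] (G : SimpleGraph V)
    (hiso : ∀ v : V, ∃ u, G.Adj v u)
    (q : ℕ) (u w : Fin q → V)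
    (hu : Function.Injective u) (hw : Function.Injective w)
    (M : Set (Sym2 (V × Bool)))
    (hM : M = {e | ∃ i : Fin q, e = s((u i, false), (w i, true))})
    (hMind : IsInducedMatchingSet (doubleCover G) M)
    (Z : Set (V × Bool)) (hZsub : Z ⊆ {x | ∃ i : Fin q, x = (u i, false)})
    (hZne : Z.Nonempty)
    (J : Set (Fin q)) (hJ : ∀ j ∈ J, (u j, false) ∉ Z)
    (a : V × Bool → Bool)
    (ha : ∀ x, a x = false ↔ (x ∈ Z ∨ ∃ j ∈ J, x = (w j, true))) :
    Satisfies a (psiCNF G) ↔ J.Nonempty :=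
  stmt5_general G q u w hu hw M hM hMind Z hZsub hZne J hJ a ha
end

section
/- Every CNF φ with at most p clauses over a finite set of n variables can be represented by a decision tree over var(φ) of size at most 2·(n + n² + ⋯ + n^p) + 1; in particular, of size at most 5·n^p whenever n ≥ 2 and p ≥ 1. -/
/-! Along every path of the tree the queried variables form a partial assignment `σ`; the tree is
built by induction on the number of clauses that some extension of `σ` still falsifies. Pick such a
clause `C` and query its variables unassigned by `σ` one after the other: a branch satisfying a
literal of `C` continues with a tree for fewer falsifiable clauses, and the branch falsifying all of
`C` ends in a `false` leaf. At most `n` queries per clause give the size recursion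
`s(p) ≤ n (1 + s(p - 1)) + 1`, `s(0) = 1`, solved by `2 (n + n² + ⋯ + nᵖ) + 1`. -/

open Finset

section

variable {X : Type*}

def Asg.IsRestrictionOf (σ : Asg X) (a : X → Bool) : Prop :=
  ∀ x b, σ x = some b → a x = b

def SatisfiesClause (a : X → Bool) (C : Finset (X × Bool)) : Prop :=
  ∃ l ∈ C, a l.1 = l.2

def SatisfiesCNF (a : X → Bool) (φ : Finset (Finset (X × Bool))) : Prop :=
  ∀ C ∈ φ, SatisfiesClause a C

def FalsifiableUnder (σ : Asg X) (C : Finset (X × Bool)) : Prop :=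
  ∃ a, σ.IsRestrictionOf a ∧ ¬ SatisfiesClause a C

def DTree.RepresentsUnder (t : DTree X) (σ : Asg X) (f : (X → Bool) → Prop) : Prop :=
  t.ReadOnce ∧ Disjoint t.varsOf σ.dom ∧ ∀ a, σ.IsRestrictionOf a → (t.eval a = true ↔ f a)

lemma DTree.RepresentsUnder.leaf {σ : Asg X} {f : (X → Bool) → Prop} {b : Bool}
    (h : ∀ a, σ.IsRestrictionOf a → (f a ↔ b = true)) : (DTree.leaf b).RepresentsUnder σ f :=
  ⟨trivial, by simp [DTree.varsOf], fun a ha => (h a ha).symm⟩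

section Update

variable [DecidableEq X] {σ : Asg X} {x : X} {b : Bool}

def Asg.assign (σ : Asg X) (x : X) (b : Bool) : Asg X := Function.update σ x (some b)

lemma Asg.isRestrictionOf_assign_iff (hx : σ x = none) {a : X → Bool} :
    (σ.assign x b).IsRestrictionOf a ↔ σ.IsRestrictionOf a ∧ a x = b := by
  constructor
  · intro h
    refine ⟨fun y c hy => h y c ?_, h x b (by simp [Asg.assign])⟩
    rwa [Asg.assign, Function.update_of_ne (by rintro rfl; simp [hx] at hy)]
  · rintro ⟨h, rfl⟩ y c hy
    by_cases hyx : y = x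
    · subst hyx; simpa [Asg.assign] using hy
    · exact h y c (by rwa [Asg.assign, Function.update_of_ne hyx] at hy)

lemma Asg.dom_assign : (σ.assign x b).dom = insert x σ.dom := by
  ext y
  by_cases hyx : y = x <;> simp [hyx, Asg.dom, Asg.assign]

lemma FalsifiableUnder.of_assign (hx : σ x = none) {C : Finset (X × Bool)}
    (h : FalsifiableUnder (σ.assign x b) C) : FalsifiableUnder σ C := by
  obtain ⟨a, ha, hC⟩ := h
  exact ⟨a, ((Asg.isRestrictionOf_assign_iff hx).1 ha).1, hC⟩

lemma not_falsifiableUnder_assign {C : Finset (X × Bool)} {l : X × Bool} (hl : l ∈ C)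
    (hx : σ l.1 = none) : ¬ FalsifiableUnder (σ.assign l.1 l.2) C := fun ⟨_, ha, hna⟩ =>
  hna ⟨l, hl, ((Asg.isRestrictionOf_assign_iff hx).1 ha).2⟩

lemma FalsifiableUnder.assign_not {C : Finset (X × Bool)} (hC : FalsifiableUnder σ C)
    {l : X × Bool} (hl : l ∈ C) (hx : σ l.1 = none) :
    FalsifiableUnder (σ.assign l.1 !l.2) C := by
  obtain ⟨a, ha, hna⟩ := hC
  refine ⟨a, (Asg.isRestrictionOf_assign_iff hx).2 ⟨ha, ?_⟩, hna⟩
  exact Bool.eq_not_iff.2 fun h => hna ⟨l, hl, h⟩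

lemma DTree.RepresentsUnder.node {t₀ t₁ : DTree X} {f : (X → Bool) → Prop} (hx : σ x = none)
    (h₀ : t₀.RepresentsUnder (σ.assign x false) f)
    (h₁ : t₁.RepresentsUnder (σ.assign x true) f) :
    (DTree.node x t₀ t₁).RepresentsUnder σ f := by
  obtain ⟨hro₀, hdis₀, heval₀⟩ := h₀
  obtain ⟨hro₁, hdis₁, heval₁⟩ := h₁
  rw [Asg.dom_assign, Set.disjoint_insert_right] at hdis₀ hdis₁
  refine ⟨⟨hdis₀.1, hdis₁.1, hro₀, hro₁⟩, ?_, fun a ha => ?_⟩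
  · simp only [DTree.varsOf, Set.disjoint_union_left, Set.disjoint_singleton_left]
    exact ⟨⟨by simp [Asg.dom, hx], hdis₀.2⟩, hdis₁.2⟩
  · cases hax : a x
    · simpa [DTree.eval, hax] using heval₀ a ((Asg.isRestrictionOf_assign_iff hx).2 ⟨ha, hax⟩)
    · simpa [DTree.eval, hax] using heval₁ a ((Asg.isRestrictionOf_assign_iff hx).2 ⟨ha, hax⟩)

lemma DTree.RepresentsUnder.exists_node {t t' : DTree X} {f : (X → Bool) → Prop}
    (hx : σ x = none) (b : Bool) (h : t.RepresentsUnder (σ.assign x b) f)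
    (h' : t'.RepresentsUnder (σ.assign x !b) f) :
    ∃ s : DTree X, s.RepresentsUnder σ f ∧ s.size = 1 + t.size + t'.size := by
  cases b
  · exact ⟨_, .node hx h h', rfl⟩
  · exact ⟨_, .node hx h' h, by simp only [DTree.size]; omega⟩

def freeVars (σ : Asg X) (C : Finset (X × Bool)) : Finset X := {x ∈ C.image Prod.fst | σ x = none}

lemma freeVars_assign {C : Finset (X × Bool)} (x : X) (b : Bool) :
    freeVars (σ.assign x b) C = (freeVars σ C).erase x := by
  ext y
  rw [freeVars, mem_filter, mem_erase, freeVars, mem_filter, Asg.assign]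
  by_cases hyx : y = x <;> simp [hyx]

lemma mem_freeVars {C : Finset (X × Bool)} {l : X × Bool} (hl : l ∈ C)
    (h : σ l.1 = none) : l.1 ∈ freeVars σ C :=
  mem_filter.2 ⟨mem_image_of_mem _ hl, h⟩

lemma not_satisfiesClause_of_freeVars_eq_empty {C : Finset (X × Bool)}
    (hC : FalsifiableUnder σ C) (hfree : freeVars σ C = ∅) {a : X → Bool}
    (ha : σ.IsRestrictionOf a) : ¬ SatisfiesClause a C := by
  obtain ⟨a₀, ha₀, hC₀⟩ := hC
  rintro ⟨l, hl, hal⟩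
  obtain ⟨c, hc⟩ := Option.ne_none_iff_exists'.1 fun h => by
    simpa [hfree] using mem_freeVars (σ := σ) hl h
  exact hC₀ ⟨l, hl, by rw [ha₀ _ _ hc, ← ha _ _ hc, hal]⟩

end Update

def sizeBound (n p : ℕ) : ℕ := 2 * (∑ i ∈ range p, n ^ (i + 1)) + 1

lemma one_le_sizeBound (n p : ℕ) : 1 ≤ sizeBound n p := Nat.le_add_left 1 _

lemma sizeBound_succ (n p : ℕ) : sizeBound n (p + 1) = n * (1 + sizeBound n p) + 1 := by
  simp only [sizeBound, sum_range_succ', mul_add, mul_sum]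
  ring_nf

lemma sum_range_pow_succ_le {n : ℕ} (hn : 2 ≤ n) (p : ℕ) :
    ∑ i ∈ range p, n ^ (i + 1) ≤ 2 * n ^ p := by
  induction p with
  | zero => simp
  | succ p ih =>
    have : 2 * n ^ p ≤ n ^ (p + 1) := by rw [pow_succ']; exact Nat.mul_le_mul_right _ hn
    rw [sum_range_succ]
    omega

lemma sizeBound_le_five_mul_pow {n : ℕ} (hn : 2 ≤ n) (p : ℕ) : sizeBound n p ≤ 5 * n ^ p := by
  have := sum_range_pow_succ_le hn p
  have := Nat.one_le_pow p n (by omega)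
  unfold sizeBound
  omega

section Construction

open Classical

variable {φ : Finset (Finset (X × Bool))} {σ : Asg X}

lemma represents_leaf_true (h : ∀ C ∈ φ, ¬ FalsifiableUnder σ C) :
    (DTree.leaf true).RepresentsUnder σ (SatisfiesCNF · φ) :=
  .leaf fun a ha => iff_of_true (fun C hC => by_contra fun hsat => h C hC ⟨a, ha, hsat⟩) rfl

lemma represents_leaf_false {C : Finset (X × Bool)} (hCφ : C ∈ φ) (hC : FalsifiableUnder σ C)
    (hfree : freeVars σ C = ∅) : (DTree.leaf false).RepresentsUnder σ (SatisfiesCNF · φ) :=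
  .leaf fun _ ha => iff_of_false
    (fun hsat => not_satisfiesClause_of_freeVars_eq_empty hC hfree ha (hsat C hCφ)) Bool.false_ne_true

lemma filter_falsifiableUnder_assign_subset {x : X} (hx : σ x = none) (b : Bool) :
    {D ∈ φ | FalsifiableUnder (σ.assign x b) D} ⊆ {D ∈ φ | FalsifiableUnder σ D} :=
  fun _ hD => mem_filter.2 ⟨(mem_filter.1 hD).1, (mem_filter.1 hD).2.of_assign hx⟩

lemma card_filter_falsifiableUnder_assign_lt {C : Finset (X × Bool)} (hCφ : C ∈ φ)
    (hC : FalsifiableUnder σ C) {l : X × Bool} (hl : l ∈ C) (hx : σ l.1 = none) :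
    #{D ∈ φ | FalsifiableUnder (σ.assign l.1 l.2) D} < #{D ∈ φ | FalsifiableUnder σ D} := by
  refine card_lt_card ((ssubset_iff_of_subset (filter_falsifiableUnder_assign_subset hx _)).2 ?_)
  exact ⟨C, mem_filter.2 ⟨hCφ, hC⟩, fun h => not_falsifiableUnder_assign hl hx (mem_filter.1 h).2⟩

lemma exists_represents_of_falsifiable {p T : ℕ}
    (ih : ∀ σ : Asg X, #{D ∈ φ | FalsifiableUnder σ D} ≤ p →
      ∃ t : DTree X, t.RepresentsUnder σ (SatisfiesCNF · φ) ∧ t.size ≤ T)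
    {C : Finset (X × Bool)} (hCφ : C ∈ φ) (k : ℕ) (σ : Asg X) (hC : FalsifiableUnder σ C)
    (hcount : #{D ∈ φ | FalsifiableUnder σ D} ≤ p + 1) (hk : #(freeVars σ C) ≤ k) :
    ∃ t : DTree X, t.RepresentsUnder σ (SatisfiesCNF · φ) ∧ t.size ≤ k * (1 + T) + 1 := by
  induction k generalizing σ with
  | zero => exact ⟨_, represents_leaf_false hCφ hC (card_eq_zero.1 (Nat.le_zero.1 hk)),
      by simp [DTree.size]⟩
  | succ k ihk =>
    obtain hfree | ⟨x, hx⟩ := (freeVars σ C).eq_empty_or_nonempty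
    · exact ⟨_, represents_leaf_false hCφ hC hfree, by simp [DTree.size]⟩
    obtain ⟨hxC, hσx⟩ := mem_filter.1 hx
    obtain ⟨l, hl, rfl⟩ := mem_image.1 hxC
    have hcount_sat := card_filter_falsifiableUnder_assign_lt hCφ hC hl hσx
    have hk' : #(freeVars (σ.assign l.1 !l.2) C) ≤ k := by
      rw [freeVars_assign, card_erase_of_mem hx]
      omega
    obtain ⟨tsat, hsat, hsat_size⟩ := ih (σ.assign l.1 l.2) (by omega)
    obtain ⟨tuns, huns, huns_size⟩ := ihk _ (hC.assign_not hl hσx)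
      ((card_le_card (filter_falsifiableUnder_assign_subset hσx _)).trans hcount) hk'
    obtain ⟨t, ht, ht_size⟩ := hsat.exists_node hσx l.2 huns
    refine ⟨t, ht, ?_⟩
    rw [ht_size, Nat.succ_mul]
    omega

lemma exists_represents [Fintype X] (p : ℕ) (σ : Asg X)
    (hcount : #{C ∈ φ | FalsifiableUnder σ C} ≤ p) :
    ∃ t : DTree X, t.RepresentsUnder σ (SatisfiesCNF · φ) ∧
      t.size ≤ sizeBound (Fintype.card X) p := by
  induction p generalizing σ with
  | zero =>
    refine ⟨_, represents_leaf_true fun C hC hf => ?_, one_le_sizeBound _ _⟩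
    exact (card_pos.2 ⟨C, mem_filter.2 ⟨hC, hf⟩⟩).ne' (Nat.le_zero.1 hcount)
  | succ p ih =>
    by_cases hall : ∃ C ∈ φ, FalsifiableUnder σ C
    · obtain ⟨C, hCφ, hC⟩ := hall
      obtain ⟨t, ht, hsize⟩ :=
        exists_represents_of_falsifiable ih hCφ _ σ hC hcount (card_le_univ _)
      exact ⟨t, ht, hsize.trans_eq (sizeBound_succ _ _).symm⟩
    · simp only [not_exists, not_and] at hall
      exact ⟨_, represents_leaf_true hall, one_le_sizeBound _ _⟩

end Construction

end

/-- every CNF with at most `p` clauses over `n` variables is represented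
by a (read-once) decision tree of size at most `2(n + n² + ⋯ + nᵖ) + 1`, hence of size
at most `5·nᵖ` whenever `n ≥ 2` and `p ≥ 1`. -/
theorem stmt8 {X : Type*} [Fintype X] (n p : ℕ) (hn : Fintype.card X = n)
    (φ : Finset (Finset (X × Bool))) (hp : φ.card ≤ p) :
    ∃ t : DTree X, t.ReadOnce ∧
      (∀ a : X → Bool, t.eval a = true ↔ ∀ C ∈ φ, ∃ l ∈ C, a l.1 = l.2) ∧
      t.size ≤ 2 * (∑ i ∈ Finset.range p, n ^ (i + 1)) + 1 ∧
      (2 ≤ n → 1 ≤ p → t.size ≤ 5 * n ^ p) := by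
  classical
  subst hn
  obtain ⟨t, ⟨hro, -, heval⟩, hsize⟩ :=
    exists_represents (φ := φ) p (fun _ => none) ((card_filter_le _ _).trans hp)
  exact ⟨t, hro, fun a => heval a (fun _ _ h => nomatch h), hsize,
    fun h2n _ => hsize.trans (sizeBound_le_five_mul_pow h2n p)⟩
end

section
/- Let G be a finite simple graph of maximum degree at most d and let M be a matching of G. Then there exists M' ⊆ M such that M' is an induced matching of G and (2d+1)·|M'| ≥ |M|. -/
/-!
An induced sub-matching of a matching `M` is an independent set of the graph on `M` in which two
edges are adjacent when an edge of `G` joins them. There every edge `ab ∈ M` has at most `2d`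
neighbours, because each of them contains its own neighbour of `a` or of `b`. The greedy algorithm
(keep an edge, discard its neighbours, repeat) therefore keeps at least `|M| / (2d + 1)` edges.
-/

namespace SimpleGraph

variable {α : Type*} (H : SimpleGraph α)

theorem exists_isIndepSet_subset_ncard_le_succ_mul (k : ℕ) {s : Set α} (hs : s.Finite)
    (hdeg : ∀ v ∈ s, (H.neighborSet v ∩ s).ncard ≤ k) :
    ∃ t ⊆ s, H.IsIndepSet t ∧ s.ncard ≤ (k + 1) * t.ncard := by
  induction hn : s.ncard using Nat.strong_induction_on generalizing s with
  | _ n ih =>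
  subst hn
  rcases s.eq_empty_or_nonempty with rfl | ⟨v, hv⟩
  · exact ⟨∅, le_rfl, by simp [IsIndepSet], by simp⟩
  set N := insert v (H.neighborSet v ∩ s)
  have hNs : N ⊆ s := Set.insert_subset hv Set.inter_subset_right
  have hN : N.ncard ≤ k + 1 := (Set.ncard_insert_le _ _).trans (by simpa using hdeg v hv)
  have hlt : (s \ N).ncard < s.ncard :=
    Set.ncard_lt_ncard (Set.sdiff_ssubset_left_iff.mpr ⟨v, hv, Set.mem_insert _ _⟩) hs
  obtain ⟨t, hts, ht, hcard⟩ := ih _ hlt hs.sdiff (fun w hw =>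
    (Set.ncard_le_ncard (Set.inter_subset_inter_right _ Set.sdiff_subset)
      (hs.inter_of_right _)).trans (hdeg w hw.1)) rfl
  have hvt : v ∉ t := fun h => (hts h).2 (Set.mem_insert _ _)
  refine ⟨insert v t, Set.insert_subset hv (hts.trans Set.sdiff_subset), ?_, ?_⟩
  · refine ht.insert fun w hw _ => ?_
    have hvw : ¬H.Adj v w := fun hvw => (hts hw).2 (Set.mem_insert_of_mem _ ⟨hvw, (hts hw).1⟩)
    exact ⟨hvw, fun hwv => hvw hwv.symm⟩
  · calc s.ncard ≤ (s \ N).ncard + N.ncard :=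
          Set.ncard_le_ncard_sdiff_add_ncard _ _ (hs.subset hNs)
      _ ≤ (k + 1) * t.ncard + (k + 1) := by omega
      _ = (k + 1) * (insert v t).ncard := by
          rw [Set.ncard_insert_of_notMem hvt (hs.sdiff.subset hts)]; ring

end SimpleGraph

section InducedMatching

variable {V : Type*} {G : SimpleGraph V} {M : Set (Sym2 V)}

theorem IsMatchingSet.mono {M' : Set (Sym2 V)} (hM : IsMatchingSet G M) (h : M' ⊆ M) :
    IsMatchingSet G M' :=
  ⟨h.trans hM.1, fun e he f hf => hM.2 e (h he) f (h hf)⟩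

def edgeConflictGraph (G : SimpleGraph V) : SimpleGraph (Sym2 V) :=
  SimpleGraph.fromRel fun e f => ∃ x ∈ e, ∃ y ∈ f, G.Adj x y

theorem IsMatchingSet.isInducedMatchingSet_of_isIndepSet {M' : Set (Sym2 V)}
    (hM : IsMatchingSet G M) (hsub : M' ⊆ M) (hind : (edgeConflictGraph G).IsIndepSet M') :
    IsInducedMatchingSet G M' := by
  refine ⟨hM.mono hsub, fun g hg hends => ?_⟩
  induction g using Sym2.ind with
  | _ x y =>
  obtain ⟨e, he, hxe⟩ := hends x (Sym2.mem_mk_left x y)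
  obtain ⟨f, hf, hyf⟩ := hends y (Sym2.mem_mk_right x y)
  obtain rfl : e = f := by
    by_contra hef
    exact hind he hf hef
      ((SimpleGraph.fromRel_adj _ _ _).mpr ⟨hef, .inl ⟨x, hxe, y, hyf, hg⟩⟩)
  rwa [← (Sym2.mem_and_mem_iff (G.ne_of_adj hg)).mp ⟨hxe, hyf⟩]

theorem ncard_edgeConflictGraph_neighborSet_inter_le [Finite V] {d : ℕ}
    (hdeg : ∀ v : V, (G.neighborSet v).ncard ≤ d) (hM : IsMatchingSet G M) {e : Sym2 V}
    (he : e ∈ M) : ((edgeConflictGraph G).neighborSet e ∩ M).ncard ≤ 2 * d := by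
  induction e using Sym2.ind with
  | _ a b =>
  have hjoin : ∀ f ∈ (edgeConflictGraph G).neighborSet s(a, b) ∩ M,
      ∃ y ∈ f, y ∈ G.neighborSet a ∪ G.neighborSet b := by
    rintro f ⟨hadj : (edgeConflictGraph G).Adj s(a, b) f, -⟩
    obtain ⟨-, ⟨x, hx, y, hy, hxy⟩ | ⟨y, hy, x, hx, hyx⟩⟩ :=
      (SimpleGraph.fromRel_adj _ _ _).mp hadj
    · exact ⟨y, hy, by rcases Sym2.mem_iff.mp hx with rfl | rfl <;> simp [hxy]⟩
    · exact ⟨y, hy, by rcases Sym2.mem_iff.mp hx with rfl | rfl <;> simp [hyx.symm]⟩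
  have : Nonempty V := ⟨a⟩
  choose! endpt hendpt_mem hendpt_adj using hjoin
  calc ((edgeConflictGraph G).neighborSet s(a, b) ∩ M).ncard
      ≤ (G.neighborSet a ∪ G.neighborSet b).ncard :=
        Set.ncard_le_ncard_of_injOn endpt hendpt_adj fun f hf f' hf' heq => by
          by_contra hne
          exact hM.2 f hf.2 f' hf'.2 hne _ (hendpt_mem f hf) (heq ▸ hendpt_mem f' hf')
    _ ≤ (G.neighborSet a).ncard + (G.neighborSet b).ncard := Set.ncard_union_le _ _
    _ ≤ 2 * d := by linarith [hdeg a, hdeg b]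

end InducedMatching

/-- every matching `M` of a graph of maximum degree at most `d` contains
an induced matching `M'` with `(2d+1)·|M'| ≥ |M|`. -/
theorem stmt9 {V : Type*} [Fintype V] (G : SimpleGraph V) (d : ℕ)
    (hdeg : ∀ v : V, (G.neighborSet v).ncard ≤ d)
    (M : Set (Sym2 V)) (hM : IsMatchingSet G M) :
    ∃ M' ⊆ M, IsInducedMatchingSet G M' ∧ M.ncard ≤ (2 * d + 1) * M'.ncard := by
  obtain ⟨M', hsub, hind, hcard⟩ :=
    (edgeConflictGraph G).exists_isIndepSet_subset_ncard_le_succ_mul (2 * d) M.toFinite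
      fun e he => ncard_edgeConflictGraph_neighborSet_inter_le hdeg hM he
  exact ⟨M', hsub, hM.isInducedMatchingSet_of_isIndepSet hsub hind, hcard⟩
end

section
/- Let G be a finite simple graph without isolated vertices with treewidth tw(G) ≤ k. Then the incidence graph of the CNF ψ(G) has treewidth at most 2k+3. -/
/-!
Take a tree decomposition of `G` of width `k`. Replacing every bag by both copies of its
vertices together with the two negative clauses gives bags of size at most `2(k+1) + 2`
which already cover all incidences of the negative clauses. Each edge `{u[1], w[2]}` of `G*`
is an edge `uw` of `G`, so some bag contains `u` and `w`; hanging a new leaf with bag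
`{u[1], w[2], u[1] ∨ w[2]}` off that node covers the incidences of the edge clause and keeps
the tree a tree and every occurrence set connected.
-/

open SimpleGraph

namespace SimpleGraph

variable {V : Type*} {G : SimpleGraph V}

lemma Walk.IsCycle.notMem_support_of_subsingleton_neighborSet {u x : V} {c : G.Walk u u}
    (hc : c.IsCycle) (hx : (G.neighborSet x).Subsingleton) : x ∉ c.support := by
  classical
  intro hxc
  have hc' : (c.rotate x hxc).IsCycle := hc.rotate hxc
  exact hc'.snd_ne_penultimate <|
    hx (Walk.adj_snd hc'.not_nil) (Walk.adj_penultimate hc'.not_nil).symm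

variable {T L : Type*} (τ : SimpleGraph T) (f : L → T)

def attachLeaves : SimpleGraph (T ⊕ L) where
  Adj
    | .inl a, .inl b => τ.Adj a b
    | .inl a, .inr l => a = f l
    | .inr l, .inl a => a = f l
    | .inr _, .inr _ => False
  symm := ⟨by
    rintro (a | l) (b | l') h
    exacts [h.symm, h, h, h]⟩
  loopless := ⟨by
    rintro (a | l) h
    exacts [τ.loopless.irrefl a h, h]⟩

variable {τ f}

lemma neighborSet_attachLeaves_inr (l : L) :
    (attachLeaves τ f).neighborSet (.inr l) = {.inl (f l)} := by
  ext (a | l') <;> simp [attachLeaves]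

lemma attachLeaves_induce_connected {S : Set (T ⊕ L)}
    (hS : (τ.induce (Sum.inl ⁻¹' S)).Connected) (hleaf : ∀ l, .inr l ∈ S → .inl (f l) ∈ S) :
    ((attachLeaves τ f).induce S).Connected := by
  let φ : τ.induce (Sum.inl ⁻¹' S) →g (attachLeaves τ f).induce S :=
    ⟨fun t => ⟨.inl t, t.2⟩, fun h => h⟩
  have hroot : ∀ a : S, ∃ t, ((attachLeaves τ f).induce S).Reachable a (φ t) := by
    rintro ⟨a | l, ha⟩
    · exact ⟨⟨a, ha⟩, .rfl⟩
    · exact ⟨⟨f l, hleaf l ha⟩, Adj.reachable rfl⟩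
  obtain ⟨t₀⟩ := hS.nonempty
  refine (connected_iff_exists_forall_reachable _).mpr ⟨φ t₀, fun a => ?_⟩
  obtain ⟨t, ht⟩ := hroot a
  exact ((hS.preconnected t₀ t).map φ).trans ht.symm

lemma attachLeaves_connected (hτ : τ.Connected) : (attachLeaves τ f).Connected := by
  rw [← (induceUnivIso _).connected_iff]
  refine attachLeaves_induce_connected ?_ fun _ _ => Set.mem_univ _
  rwa [Set.preimage_univ, (induceUnivIso τ).connected_iff]

lemma attachLeaves_isAcyclic (hτ : τ.IsAcyclic) : (attachLeaves τ f).IsAcyclic := by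
  intro a c hc
  have hsupp : ∀ x ∈ c.support, x ∈ Set.range Sum.inl := by
    rintro (t | l) hx
    · exact ⟨t, rfl⟩
    · refine absurd hx (hc.notMem_support_of_subsingleton_neighborSet ?_)
      rw [neighborSet_attachLeaves_inr]
      exact Set.subsingleton_singleton
  have hcyc : (c.induce _ hsupp).IsCycle := by
    rw [← Walk.map_induce c hsupp] at hc
    exact (Walk.isCycle_map_iff_of_injective Subtype.val_injective).mp hc
  let e : τ ≃g (attachLeaves τ f).induce (Set.range Sum.inl) :=
    ⟨Equiv.ofInjective _ Sum.inl_injective, .rfl⟩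
  exact e.isAcyclic_iff.mp hτ _ hcyc

lemma IsTree.attachLeaves (hτ : τ.IsTree) : (attachLeaves τ f).IsTree :=
  ⟨attachLeaves_connected hτ.connected, attachLeaves_isAcyclic hτ.isAcyclic⟩

end SimpleGraph

section Treewidth

variable {V : Type*} {H : SimpleGraph V} {k : ℕ}

lemma treewidth_le_of_isTreeDecomp {T : Type} {τ : SimpleGraph T} {B : T → Set V}
    (hB : IsTreeDecomp H τ B) (hwidth : ∀ t, (B t).ncard ≤ k + 1) : treewidth H ≤ k :=
  Nat.sInf_le ⟨T, τ, B, hB, hwidth⟩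

lemma isTreeDecomp_univ (H : SimpleGraph V) :
    IsTreeDecomp H (⊥ : SimpleGraph Unit) fun _ => Set.univ :=
  ⟨.of_subsingleton, fun _ _ => ⟨(), fun _ _ => trivial⟩,
    fun _ => @Connected.of_subsingleton _ _ ⟨⟨(), trivial⟩⟩ _⟩

-- No finiteness is needed: the one-bag decomposition has width at most `Nat.card V`,
-- which is `0` (the junk value of `ncard`) for infinite `V`.
lemma exists_isTreeDecomp_of_treewidth_le (h : treewidth H ≤ k) :
    ∃ (T : Type) (τ : SimpleGraph T) (B : T → Set V),
      IsTreeDecomp H τ B ∧ ∀ t, (B t).ncard ≤ k + 1 := by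
  obtain ⟨T, τ, B, hB, hwidth⟩ := Nat.sInf_mem (s := {k | ∃ (T : Type) (τ : SimpleGraph T)
      (B : T → Set V), IsTreeDecomp H τ B ∧ ∀ t, (B t).ncard ≤ k + 1})
    ⟨Nat.card V, Unit, ⊥, _, isTreeDecomp_univ H, fun _ => by simp⟩
  exact ⟨T, τ, B, hB, fun t => (hwidth t).trans (Nat.succ_le_succ h)⟩

end Treewidth

lemma exists_eq_of_mem_edgeSet_incidenceGraph {W : Type*} {φ : CNF W}
    {e : Sym2 (W ⊕ {C // C ∈ φ})} (he : e ∈ (incidenceGraph φ).edgeSet) :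
    ∃ (x : W) (C : {C // C ∈ φ}), (∃ b, (x, b) ∈ C.1) ∧ e = s(.inl x, .inr C) := by
  induction e using Sym2.ind with
  | _ a c =>
    obtain ⟨-, ⟨x, C, rfl, rfl, hxC⟩ | ⟨x, C, rfl, rfl, hxC⟩⟩ := he
    · exact ⟨x, C, hxC, rfl⟩
    · exact ⟨x, C, hxC, Sym2.eq_swap⟩

namespace psiCNF

variable {V : Type*} (G : SimpleGraph V)

def negClause (b : Bool) : {C // C ∈ psiCNF G} :=
  ⟨{l | ∃ v : V, l = ((v, b), false)}, by
    cases b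
    exacts [Or.inr (Or.inl rfl), Or.inr (Or.inr rfl)]⟩

-- The edges of `G*` correspond to the darts of `G`: the dart `(u, w)` gives `{u[1], w[2]}`.
def edgeClause (d : G.Dart) : {C // C ∈ psiCNF G} :=
  ⟨{l | ∃ x ∈ s((d.fst, false), (d.snd, true)), l = (x, true)},
    Or.inl ⟨_, show G.Adj _ _ ∧ _ from ⟨d.adj, Bool.false_ne_true⟩, rfl⟩⟩

variable {G}

lemma clause_cases (C : {C // C ∈ psiCNF G}) :
    (∃ d, C = edgeClause G d) ∨ ∃ b, C = negClause G b := by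
  obtain ⟨C, ⟨e, he, rfl⟩ | rfl | rfl⟩ := C
  · left
    induction e using Sym2.ind with
    | _ x y =>
      obtain ⟨hadj, hne⟩ : G.Adj x.1 y.1 ∧ x.2 ≠ y.2 := he
      obtain ⟨x, _ | _⟩ := x <;> obtain ⟨y, _ | _⟩ := y <;> simp only [ne_eq, not_true] at hne
      · exact ⟨⟨(x, y), hadj⟩, rfl⟩
      · exact ⟨⟨(y, x), hadj.symm⟩, Subtype.ext (by simp [edgeClause, Sym2.eq_swap])⟩
  · exact .inr ⟨false, rfl⟩
  · exact .inr ⟨true, rfl⟩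

lemma occurs_edgeClause {d : G.Dart} {x : V × Bool} :
    (∃ b, (x, b) ∈ (edgeClause G d).1) ↔ x = (d.fst, false) ∨ x = (d.snd, true) := by
  simp [edgeClause]

lemma occurs_negClause {b : Bool} {x : V × Bool} :
    (∃ b', (x, b') ∈ (negClause G b).1) ↔ x.2 = b := by
  constructor
  · rintro ⟨_, v, hv⟩
    rw [(Prod.mk.inj hv).1]
  · intro h
    exact ⟨false, x.1, by rw [← h]⟩

lemma edgeClause_injective : Function.Injective (edgeClause G) := by
  intro d d' h
  have hfst : (d.fst, false) = (d'.fst, false) ∨ (d.fst, false) = (d'.snd, true) :=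
    occurs_edgeClause.mp (h ▸ occurs_edgeClause.mpr (.inl rfl))
  have hsnd : (d.snd, true) = (d'.fst, false) ∨ (d.snd, true) = (d'.snd, true) :=
    occurs_edgeClause.mp (h ▸ occurs_edgeClause.mpr (.inr rfl))
  simp only [Prod.mk.injEq, Bool.false_eq_true, Bool.true_eq_false, and_false, and_true,
    or_false, false_or] at hfst hsnd
  exact Dart.ext _ _ (Prod.ext hfst hsnd)

lemma edgeClause_ne_negClause (d : G.Dart) (b : Bool) : edgeClause G d ≠ negClause G b := by
  intro h
  have hpos : ((d.fst, false), true) ∈ (negClause G b).1 := h ▸ ⟨_, Sym2.mem_mk_left _ _, rfl⟩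
  simp [negClause] at hpos

variable {T : Type*}

variable (G) in
def bag (B : T → Set V) : T ⊕ G.Dart → Set ((V × Bool) ⊕ {C // C ∈ psiCNF G})
  | .inl t => Sum.inl '' (B t ×ˢ Set.univ) ∪ {.inr (negClause G false), .inr (negClause G true)}
  | .inr d => {.inl (d.fst, false), .inl (d.snd, true), .inr (edgeClause G d)}

variable {B : T → Set V}

@[simp] lemma inl_mem_bag_inl {t : T} {x : V × Bool} :
    .inl x ∈ bag G B (.inl t) ↔ x.1 ∈ B t := by
  simp [bag]

@[simp] lemma inr_mem_bag_inl {t : T} {C : {C // C ∈ psiCNF G}} :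
    .inr C ∈ bag G B (.inl t) ↔ ∃ b, C = negClause G b := by
  simp [bag, Bool.exists_bool]

@[simp] lemma inl_mem_bag_inr {d : G.Dart} {x : V × Bool} :
    .inl x ∈ bag G B (.inr d) ↔ x = (d.fst, false) ∨ x = (d.snd, true) := by
  simp [bag]

@[simp] lemma inr_mem_bag_inr {d : G.Dart} {C : {C // C ∈ psiCNF G}} :
    .inr C ∈ bag G B (.inr d) ↔ C = edgeClause G d := by
  simp [bag]

lemma ncard_bag_le {k : ℕ} (hwidth : ∀ t, (B t).ncard ≤ k + 1) (n : T ⊕ G.Dart) :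
    (bag G B n).ncard ≤ 2 * k + 3 + 1 := by
  cases n with
  | inl t =>
    have hneg := Set.ncard_insert_le (α := (V × Bool) ⊕ {C // C ∈ psiCNF G})
      (.inr (negClause G false)) {.inr (negClause G true)}
    rw [Set.ncard_singleton] at hneg
    calc (bag G B (.inl t)).ncard
        ≤ (B t ×ˢ (Set.univ : Set Bool)).ncard + 2 := by
          refine (Set.ncard_union_le _ _).trans ?_
          rw [Set.ncard_image_of_injective _ Sum.inl_injective]
          omega
      _ ≤ 2 * k + 3 + 1 := by
          rw [Set.ncard_prod, Set.ncard_univ, Nat.card_eq_fintype_card, Fintype.card_bool]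
          linarith [hwidth t]
  | inr d =>
    have h₁ := Set.ncard_insert_le (α := (V × Bool) ⊕ {C // C ∈ psiCNF G})
      (.inl (d.fst, false)) {.inl (d.snd, true), .inr (edgeClause G d)}
    have h₂ := Set.ncard_insert_le (α := (V × Bool) ⊕ {C // C ∈ psiCNF G})
      (.inl (d.snd, true)) {.inr (edgeClause G d)}
    rw [Set.ncard_singleton] at h₂
    simp only [bag]
    omega

lemma isTreeDecomp_bag {τ : SimpleGraph T} (hB : IsTreeDecomp G τ B) (host : G.Dart → T)
    (hhost : ∀ d, ∀ v ∈ d.edge, v ∈ B (host d)) :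
    IsTreeDecomp (incidenceGraph (psiCNF G)) (attachLeaves τ host) (bag G B) := by
  obtain ⟨hτ, -, hconn⟩ := hB
  refine ⟨hτ.attachLeaves, ?_, ?_⟩
  · intro e he
    obtain ⟨x, C, hxC, rfl⟩ := exists_eq_of_mem_edgeSet_incidenceGraph he
    suffices ∃ n, .inl x ∈ bag G B n ∧ .inr C ∈ bag G B n by simpa
    obtain ⟨d, rfl⟩ | ⟨b, rfl⟩ := clause_cases C
    · exact ⟨.inr d, by simpa using occurs_edgeClause.mp hxC⟩
    · obtain ⟨⟨t, ht⟩⟩ := (hconn x.1).nonempty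
      exact ⟨.inl t, by simpa using ht⟩
  · rintro (x | C)
    · have hnodes : Sum.inl ⁻¹' {n | .inl x ∈ bag G B n} = {t | x.1 ∈ B t} := by
        ext t
        simp
      refine attachLeaves_induce_connected (hnodes ▸ hconn x.1) fun d hd => ?_
      obtain rfl | rfl := (inl_mem_bag_inr (B := B)).mp hd
      exacts [by simpa using hhost d _ (Sym2.mem_mk_left _ _),
        by simpa using hhost d _ (Sym2.mem_mk_right _ _)]
    · obtain ⟨d, rfl⟩ | ⟨b, rfl⟩ := clause_cases C
      · have hnodes : {n | .inr (edgeClause G d) ∈ bag G B n} = {.inr d} := by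
          ext (t | d')
          · simp [edgeClause_ne_negClause]
          · simp [edgeClause_injective.eq_iff, eq_comm]
        rw [hnodes]
        exact .of_subsingleton
      · refine attachLeaves_induce_connected ?_ fun d hd => ?_
        · have hnodes : Sum.inl ⁻¹' {n | .inr (negClause G b) ∈ bag G B n} = Set.univ := by
            ext t
            simp
          rw [hnodes, (induceUnivIso τ).connected_iff]
          exact hτ.connected
        · exact absurd ((inr_mem_bag_inr (B := B)).mp hd).symm (edgeClause_ne_negClause d b)

end psiCNF

theorem stmt13_general {V : Type} (G : SimpleGraph V) (k : ℕ) (htw : treewidth G ≤ k) :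
    treewidth (incidenceGraph (psiCNF G)) ≤ 2 * k + 3 := by
  obtain ⟨T, τ, B, hB, hwidth⟩ := exists_isTreeDecomp_of_treewidth_le htw
  choose host hhost using fun d : G.Dart => hB.2.1 d.edge d.edge_mem
  exact treewidth_le_of_isTreeDecomp (psiCNF.isTreeDecomp_bag hB host hhost)
    (psiCNF.ncard_bag_le hwidth)

/-- if `G` has no isolated vertices and `tw(G) ≤ k`, then the incidence
graph of the CNF `ψ(G)` has treewidth at most `2k+3`. -/
theorem stmt13 {V : Type} [Fintype V] (G : SimpleGraph V)
    (hiso : ∀ v : V, ∃ u, G.Adj v u) (k : ℕ) (htw : treewidth G ≤ k) :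
    treewidth (incidenceGraph (psiCNF G)) ≤ 2 * k + 3 :=
  stmt13_general G k htw
end
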